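/- Let n ≥ 3 and 1 ≤ k < n/2. Then the rank of C_{n,k} over ℂ equals n − 1 if and only if gcd(n,k) = 1 and gcd(n,k+1) = 1. -/

import Mathlib

/-!
`C_{n,k}` is the transpose of the circulant matrix of `r = r(k)`. The Vandermonde matrix of a
primitive `n`-th root of unity `ω` diagonalises it, with eigenvalues `p(ωʲ)` where
`p(z) = ∑ₜ rₜ zᵗ`, so its rank is the number of `j` with `p(ωʲ) ≠ 0`. For `zⁿ = 1` one has
`(z - 1) zᵏ p(z) = (zᵏ - 1)(zᵏ⁺¹ - 1)`, and `p(1) = 0`. Hence the rank is `n - 1` exactly when no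
`n`-th root of unity other than `1` is a `k`-th or a `(k+1)`-th root of unity, that is, when `n` is
coprime to both `k` and `k + 1`.
-/

open BigOperators Matrix

/-- The vector `r(l) ∈ ℂ^n`: `r(l)_0 = 0`, `r(l)_m = 1` for `1 ≤ m ≤ l`,
`r(l)_m = −1` for `n − l ≤ m ≤ n−1`, and `r(l)_m = 0` otherwise. -/
def rVec (n l m : ℕ) : ℂ :=
  if m = 0 then 0 else if m ≤ l then 1 else if n - l ≤ m then -1 else 0

/-- The matrix `C_{n,k}`, whose `i`-th row is `T^i(r(k))`;
equivalently `(C_{n,k})_{ij} = r(k)_{(j−i) mod n}`. -/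
def Cnk (n k : ℕ) : Matrix (Fin n) (Fin n) ℂ :=
  Matrix.of fun i j => rVec n k ((j.val + n - i.val) % n)

open Finset

namespace Matrix

def circulantSymbol {R : Type*} [CommRing R] {n : ℕ} (v : Fin n → R) (z : R) : R :=
  ∑ t : Fin n, v t * z ^ (t : ℕ)

theorem circulant_transpose_mul_vandermonde {R : Type*} [CommRing R] {n : ℕ} [NeZero n]
    (v : Fin n → R) {ω : R} (hω : ω ^ n = 1) :
    (circulant v)ᵀ * vandermonde (fun i : Fin n => ω ^ (i : ℕ)) =
      vandermonde (fun i : Fin n => ω ^ (i : ℕ)) *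
        diagonal (fun j : Fin n => circulantSymbol v (ω ^ (j : ℕ))) := by
  ext i j
  rw [mul_apply, mul_diagonal, circulantSymbol, mul_sum]
  refine (Fintype.sum_equiv (Equiv.addRight i) _ _ fun t => ?_).symm
  simp only [transpose_apply, circulant_apply, Equiv.coe_addRight, add_sub_cancel_right,
    vandermonde_apply, Fin.val_add, ← pow_eq_pow_mod _ hω, ← pow_mul]
  ring

theorem rank_circulant {K : Type*} [Field K] [DecidableEq K] {n : ℕ} [NeZero n] (v : Fin n → K)
    {ω : K} (hω : IsPrimitiveRoot ω n) :
    (circulant v).rank = Fintype.card {j : Fin n // circulantSymbol v (ω ^ (j : ℕ)) ≠ 0} := by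
  set F := vandermonde (fun i : Fin n => ω ^ (i : ℕ))
  have hF : IsUnit F.det := by
    rw [isUnit_iff_ne_zero, det_vandermonde_ne_zero_iff]
    exact fun i j hij => Fin.ext (hω.pow_inj i.isLt j.isLt hij)
  rw [← rank_transpose, ← rank_mul_eq_left_of_isUnit_det F _ hF,
    circulant_transpose_mul_vandermonde v hω.pow_eq_one,
    rank_mul_eq_right_of_isUnit_det F _ hF, rank_diagonal]

end Matrix

theorem Fintype.card_subtype_eq_card_sub_one_iff {α : Type*} [Fintype α] {p : α → Prop}
    [DecidablePred p] {a : α} (ha : ¬ p a) :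
    Fintype.card {x // p x} = Fintype.card α - 1 ↔ ∀ x, x ≠ a → p x := by
  classical
  have hfilter : univ.filter p = (univ.erase a).filter p := by
    rw [filter_erase, erase_eq_of_notMem (by simpa using ha)]
  rw [Fintype.card_subtype, hfilter, ← card_univ, ← card_erase_of_mem (mem_univ a),
    card_filter_eq_iff]
  simp

theorem Nat.coprime_iff_forall_not_dvd_mul {n m : ℕ} (hn : n ≠ 0) :
    n.Coprime m ↔ ∀ j, 0 < j → j < n → ¬ n ∣ j * m := by
  refine ⟨fun h j hj hjn hdvd => (Nat.le_of_dvd hj (h.dvd_of_dvd_mul_right hdvd)).not_gt hjn,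
    fun h => by_contra fun hg => ?_⟩
  have hg_pos : 0 < n.gcd m := Nat.gcd_pos_of_pos_left m (Nat.pos_of_ne_zero hn)
  have hg_one : 1 < n.gcd m := by unfold Nat.Coprime at hg; omega
  refine h (n / n.gcd m) (Nat.div_pos (Nat.le_of_dvd (Nat.pos_of_ne_zero hn) (n.gcd_dvd_left m))
    hg_pos) (Nat.div_lt_self (Nat.pos_of_ne_zero hn) hg_one) ⟨m / n.gcd m, ?_⟩
  rw [← Nat.mul_div_assoc _ (n.gcd_dvd_right m), Nat.div_mul_right_comm (n.gcd_dvd_left m)]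

theorem IsPrimitiveRoot.forall_pow_pow_ne_one_iff_coprime {M : Type*} [CommMonoid M] {ω : M}
    {n : ℕ} [NeZero n] (hω : IsPrimitiveRoot ω n) (m : ℕ) :
    (∀ j : Fin n, j ≠ 0 → (ω ^ (j : ℕ)) ^ m ≠ 1) ↔ n.Coprime m := by
  simp only [Nat.coprime_iff_forall_not_dvd_mul (NeZero.ne n), ← pow_mul, ne_eq,
    hω.pow_eq_one_iff_dvd, Fin.forall_iff, Fin.ext_iff, Fin.val_zero, Nat.pos_iff_ne_zero]
  exact ⟨fun h j hj hjn => h j hjn hj, fun h j hjn hj => h j hj hjn⟩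

theorem Cnk_eq_transpose_circulant (n k : ℕ) :
    Cnk n k = (circulant fun t : Fin n => rVec n k t)ᵀ := by
  ext i j
  simp only [Cnk, of_apply, transpose_apply, circulant_apply, Fin.val_sub]
  congr 2
  omega

section rVec

variable {n k : ℕ}

theorem circulantSymbol_rVec (hk : 2 * k < n) (z : ℂ) :
    circulantSymbol (fun t : Fin n => rVec n k t) z =
      ∑ t ∈ Ico 1 (k + 1), z ^ t - ∑ t ∈ Ico (n - k) n, z ^ t := by
  have hterm : ∀ t ∈ range n, rVec n k t * z ^ t =
      (if t ∈ Ico 1 (k + 1) then z ^ t else 0) - (if t ∈ Ico (n - k) n then z ^ t else 0) := by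
    intro t ht
    simp only [mem_range] at ht
    simp only [mem_Ico, rVec]
    split_ifs <;> first | ring1 | (exfalso; omega)
  rw [circulantSymbol, Fin.sum_univ_eq_sum_range (fun t => rVec n k t * z ^ t),
    sum_congr rfl hterm, sum_sub_distrib, sum_ite_mem, sum_ite_mem,
    inter_eq_right.mpr fun t ht => by simp only [mem_Ico, mem_range] at ht ⊢; omega,
    inter_eq_right.mpr fun t ht => by simp only [mem_Ico, mem_range] at ht ⊢; omega]

theorem circulantSymbol_rVec_one (hk : 2 * k < n) :
    circulantSymbol (fun t : Fin n => rVec n k t) 1 = 0 := by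
  simp [circulantSymbol_rVec hk, show n - (n - k) = k by omega]

theorem sub_one_mul_pow_mul_circulantSymbol_rVec (hk : 2 * k < n) {z : ℂ} (hz : z ^ n = 1) :
    (z - 1) * z ^ k * circulantSymbol (fun t : Fin n => rVec n k t) z =
      (z ^ k - 1) * (z ^ (k + 1) - 1) := by
  have hhead : ∑ t ∈ Ico 1 (k + 1), z ^ t = z * ∑ i ∈ range k, z ^ i := by
    rw [sum_Ico_eq_sum_range, mul_sum, Nat.add_sub_cancel]
    exact sum_congr rfl fun i _ => by ring
  have htail : z ^ k * ∑ t ∈ Ico (n - k) n, z ^ t = ∑ i ∈ range k, z ^ i := by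
    rw [sum_Ico_eq_sum_range, mul_sum, show n - (n - k) = k by omega]
    refine sum_congr rfl fun i _ => ?_
    rw [← pow_add, show k + (n - k + i) = n + i by omega, pow_add, hz, one_mul]
  rw [circulantSymbol_rVec hk]
  linear_combination
    (z - 1) * z ^ k * hhead - (z - 1) * htail + (z ^ (k + 1) - 1) * geom_sum_mul z k

theorem circulantSymbol_rVec_ne_zero_iff (hk : 2 * k < n) {z : ℂ} (hz : z ^ n = 1)
    (hz1 : z ≠ 1) :
    circulantSymbol (fun t : Fin n => rVec n k t) z ≠ 0 ↔ z ^ k ≠ 1 ∧ z ^ (k + 1) ≠ 1 := by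
  have hz0 : z ≠ 0 := by
    rintro rfl
    simp [zero_pow (by omega : n ≠ 0)] at hz
  have hfactor : (z - 1) * z ^ k ≠ 0 := mul_ne_zero (sub_ne_zero.mpr hz1) (pow_ne_zero k hz0)
  rw [← mul_ne_zero_iff_left hfactor, sub_one_mul_pow_mul_circulantSymbol_rVec hk hz,
    mul_ne_zero_iff, sub_ne_zero, sub_ne_zero]

end rVec

theorem rank_Cnk_eq_sub_one_iff_general (n k : ℕ) (hk2 : 2 * k < n) :
    (Cnk n k).rank = n - 1 ↔ (Nat.gcd n k = 1 ∧ Nat.gcd n (k + 1) = 1) := by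
  classical
  have : NeZero n := ⟨by omega⟩
  obtain ⟨ω, hω⟩ : ∃ ω : ℂ, IsPrimitiveRoot ω n :=
    ⟨_, Complex.isPrimitiveRoot_exp n (NeZero.ne n)⟩
  set S := circulantSymbol fun t : Fin n => rVec n k t
  have hcard := Fintype.card_subtype_eq_card_sub_one_iff
    (p := fun j : Fin n => S (ω ^ (j : ℕ)) ≠ 0) (a := 0)
    (by simpa using circulantSymbol_rVec_one hk2)
  have hsymbol (j : Fin n) (hj : j ≠ 0) :
      S (ω ^ (j : ℕ)) ≠ 0 ↔ (ω ^ (j : ℕ)) ^ k ≠ 1 ∧ (ω ^ (j : ℕ)) ^ (k + 1) ≠ 1 :=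
    circulantSymbol_rVec_ne_zero_iff hk2 (by rw [pow_right_comm, hω.pow_eq_one, one_pow])
      (hω.pow_ne_one_of_pos_of_lt (Fin.val_ne_zero_iff.mpr hj) j.isLt)
  rw [Fintype.card_fin] at hcard
  rw [Cnk_eq_transpose_circulant, rank_transpose, rank_circulant _ hω, hcard,
    ← Nat.coprime_iff_gcd_eq_one, ← Nat.coprime_iff_gcd_eq_one,
    ← hω.forall_pow_pow_ne_one_iff_coprime, ← hω.forall_pow_pow_ne_one_iff_coprime, ← forall_and]
  simp only [← imp_and]
  exact forall₂_congr hsymbol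

/-- The rank of `C_{n,k}` over `ℂ` equals `n − 1` if and only
if `gcd(n,k) = 1` and `gcd(n,k+1) = 1`. -/
theorem rank_Cnk_eq_sub_one_iff (n k : ℕ) (hn : 3 ≤ n) (hk1 : 1 ≤ k)
    (hk2 : 2 * k < n) :
    (Cnk n k).rank = n - 1 ↔ (Nat.gcd n k = 1 ∧ Nat.gcd n (k + 1) = 1) :=
  rank_Cnk_eq_sub_one_iff_general n k hk2
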